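/- arXiv:2001.10116 — 3 statements merged into one kernel-verified Lean document; each statement's English description precedes it below -/
import Mathlib

section
/- Let n ≥ 6. Consider the position of n-Sim consisting of a drawn K_5 on 5 of the n vertices with one red edge removed (that is: 5 green edges forming a 5-cycle on these 5 vertices, and 4 red edges that are 4 of the 5 edges of the complementary 5-cycle), all other edges of K_n uncolored, with PII to move. Then PII has a winning strategy from this position. -/
/-- The set of valid (non-loop) edges of the complete graph on `Fin n`. -/
def simEdges (n : ℕ) : Finset (Sym2 (Fin n)) :=
  Finset.univ.filter (fun e => ¬ e.IsDiag)

/-- An edge set `S` contains a triangle: three edges of `S` spanned by three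
distinct vertices. -/
def HasTriangle {n : ℕ} (S : Finset (Sym2 (Fin n))) : Prop :=
  ∃ a b c : Fin n, a ≠ b ∧ a ≠ c ∧ b ≠ c ∧
    s(a, b) ∈ S ∧ s(a, c) ∈ S ∧ s(b, c) ∈ S

/-- The uncolored edges, given the two players' edge sets. -/
def avail {n : ℕ} (A B : Finset (Sym2 (Fin n))) : Finset (Sym2 (Fin n)) :=
  simEdges n \ (A ∪ B)

/-- `MoverWins own opp` : in the game of n-Sim (players alternately claim an
uncolored edge of `K n`, and whoever first has a triangle in their own edges
loses), the player about to move, whose already-claimed edges are `own` while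
the opponent's are `opp`, has a winning strategy.

The mover wins iff they can claim some uncolored edge `e` not creating a
triangle in their own color, so that afterwards the opponent still has to move
(there is an uncolored edge left; otherwise the game is a draw), and every
reply `f` of the opponent either completes a triangle in the opponent's color
(so the opponent loses) or leads to a position where the original mover again
wins. -/
inductive MoverWins {n : ℕ} : Finset (Sym2 (Fin n)) → Finset (Sym2 (Fin n)) → Prop where
  | step (own opp : Finset (Sym2 (Fin n))) (e : Sym2 (Fin n))
      (he : e ∈ avail own opp)
      (hsafe : ¬ HasTriangle (insert e own))
      (hne : (avail opp (insert e own)).Nonempty)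
      (hreplies : ∀ f ∈ avail opp (insert e own), ¬ HasTriangle (insert f opp) →
        MoverWins (insert e own) (insert f opp)) :
      MoverWins own opp

/-- `NonMoverWins own opp` : the player NOT about to move (the one whose edges
are `opp`) has a winning strategy: there is at least one uncolored edge (the
mover must move), and every non-losing move of the mover leads to a position
won by the (new) mover, i.e. by the original non-mover. -/
def NonMoverWins {n : ℕ} (own opp : Finset (Sym2 (Fin n))) : Prop :=
  (avail own opp).Nonempty ∧
    ∀ e ∈ avail own opp, ¬ HasTriangle (insert e own) →
      MoverWins opp (insert e own)

/-- The green edges of a drawn `K₅` on the five distinct vertices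
`v 0, …, v 4`: the pentagon `v i — v (i+1)`. -/
def greenK5 {n : ℕ} (v : Fin 5 → Fin n) : Finset (Sym2 (Fin n)) :=
  Finset.univ.image (fun i : Fin 5 => s(v i, v (i + 1)))

/-- The red edges of a drawn `K₅` on the five distinct vertices
`v 0, …, v 4`: the complementary pentagram `v i — v (i+2)`. -/
def redK5 {n : ℕ} (v : Fin 5 → Fin n) : Finset (Sym2 (Fin n)) :=
  Finset.univ.image (fun i : Fin 5 => s(v i, v (i + 2)))

/-! ### Auxiliary material for the proof -/

open Finset

section Aux

variable {n : ℕ}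

lemma sim_hasTriangle_mono {S T : Finset (Sym2 (Fin n))} (h : S ⊆ T) :
    HasTriangle S → HasTriangle T := by
  rintro ⟨a, b, c, h1, h2, h3, e1, e2, e3⟩
  exact ⟨a, b, c, h1, h2, h3, h e1, h e2, h e3⟩

lemma sim_mem_avail {A B : Finset (Sym2 (Fin n))} {e : Sym2 (Fin n)} :
    e ∈ avail A B ↔ ¬ e.IsDiag ∧ e ∉ A ∧ e ∉ B := by
  simp [avail, simEdges, and_assoc, not_or]

/-- Extract three distinct elements from a finset of size at least 3. -/
lemma sim_extract3 {α : Type*} [DecidableEq α] (T : Finset α) (h : 3 ≤ T.card) :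
    ∃ a ∈ T, ∃ b ∈ T, ∃ c ∈ T, a ≠ b ∧ a ≠ c ∧ b ≠ c := by
  obtain ⟨a, ha⟩ := Finset.card_pos.1 (by omega : 0 < T.card)
  have h2 : 2 ≤ (T.erase a).card := by
    rw [Finset.card_erase_of_mem ha]; omega
  obtain ⟨b, hb⟩ := Finset.card_pos.1 (by omega : 0 < (T.erase a).card)
  have h3 : 1 ≤ ((T.erase a).erase b).card := by
    rw [Finset.card_erase_of_mem hb]; omega
  obtain ⟨c, hc⟩ := Finset.card_pos.1 (by omega : 0 < ((T.erase a).erase b).card)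
  have hba : b ≠ a := (Finset.mem_erase.1 hb).1
  have hcb : c ≠ b := (Finset.mem_erase.1 hc).1
  have hca : c ≠ a := (Finset.mem_erase.1 (Finset.mem_erase.1 hc).2).1
  exact ⟨a, ha, b, (Finset.mem_erase.1 hb).2, c,
    (Finset.mem_erase.1 (Finset.mem_erase.1 hc).2).2, hba.symm, hca.symm, hcb.symm⟩

/-- Ramsey-type fact: for `n ≥ 6`, if both colour classes are triangle-free
then some edge is still uncolored (no draws are possible). -/
lemma sim_avail_nonempty (hn : 6 ≤ n) {A B : Finset (Sym2 (Fin n))}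
    (hA : ¬ HasTriangle A) (hB : ¬ HasTriangle B) : (avail A B).Nonempty := by
  by_contra hne
  rw [Finset.not_nonempty_iff_eq_empty] at hne
  have tot : ∀ x y : Fin n, x ≠ y → s(x, y) ∈ A ∪ B := by
    intro x y hxy
    by_contra hmem
    have : s(x, y) ∈ avail A B := by
      rw [sim_mem_avail, Sym2.mk_isDiag_iff]
      rw [Finset.mem_union] at hmem
      push_neg at hmem
      exact ⟨hxy, hmem.1, hmem.2⟩
    rw [hne] at this
    exact absurd this (Finset.notMem_empty _)
  set z : Fin n := ⟨5, by omega⟩ with hz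
  set w : Fin 5 → Fin n := fun i => ⟨i.val, by omega⟩ with hw
  have hwinj : Function.Injective w := by
    intro a b hab
    have h2 : (w a).val = (w b).val := congrArg Fin.val hab
    simp only [hw] at h2
    exact Fin.ext h2
  have hzw : ∀ i : Fin 5, z ≠ w i := by
    intro i h
    have h2 : (z : Fin n).val = (w i).val := congrArg Fin.val h
    simp only [hz, hw] at h2
    have hlt := i.isLt
    omega
  have core : ∀ (C D : Finset (Sym2 (Fin n))), ¬ HasTriangle C → ¬ HasTriangle D →
      (∀ x y : Fin n, x ≠ y → s(x, y) ∈ C ∪ D) →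
      ∀ a b c : Fin 5, a ≠ b → a ≠ c → b ≠ c →
      s(z, w a) ∈ C → s(z, w b) ∈ C → s(z, w c) ∈ C → False := by
    intro C D hC hD hCD a b c hab hac hbc h1 h2 h3
    have hwab : w a ≠ w b := fun h => hab (hwinj h)
    have hwac : w a ≠ w c := fun h => hac (hwinj h)
    have hwbc : w b ≠ w c := fun h => hbc (hwinj h)
    by_cases g1 : s(w a, w b) ∈ C
    · exact hC ⟨z, w a, w b, hzw a, hzw b, hwab, h1, h2, g1⟩
    by_cases g2 : s(w a, w c) ∈ C
    · exact hC ⟨z, w a, w c, hzw a, hzw c, hwac, h1, h3, g2⟩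
    by_cases g3 : s(w b, w c) ∈ C
    · exact hC ⟨z, w b, w c, hzw b, hzw c, hwbc, h2, h3, g3⟩
    have d1 : s(w a, w b) ∈ D := by
      rcases Finset.mem_union.1 (hCD _ _ hwab) with h | h
      · exact absurd h g1
      · exact h
    have d2 : s(w a, w c) ∈ D := by
      rcases Finset.mem_union.1 (hCD _ _ hwac) with h | h
      · exact absurd h g2
      · exact h
    have d3 : s(w b, w c) ∈ D := by
      rcases Finset.mem_union.1 (hCD _ _ hwbc) with h | h
      · exact absurd h g3
      · exact h
    exact hD ⟨w a, w b, w c, hwab, hwac, hwbc, d1, d2, d3⟩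
  classical
  have hcard := Finset.card_filter_add_card_filter_not
    (s := (Finset.univ : Finset (Fin 5))) (p := fun i => s(z, w i) ∈ A)
  have hu5 : (Finset.univ : Finset (Fin 5)).card = 5 := by simp
  have hsplit : 3 ≤ (Finset.univ.filter (fun i : Fin 5 => s(z, w i) ∈ A)).card ∨
      3 ≤ (Finset.univ.filter (fun i : Fin 5 => ¬ (s(z, w i) ∈ A))).card := by
    omega
  rcases hsplit with h | h
  · obtain ⟨a, ha, b, hb, c, hc, hab, hac, hbc⟩ := sim_extract3 _ h
    exact core A B hA hB tot a b c hab hac hbc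
      (Finset.mem_filter.1 ha).2 (Finset.mem_filter.1 hb).2 (Finset.mem_filter.1 hc).2
  · obtain ⟨a, ha, b, hb, c, hc, hab, hac, hbc⟩ := sim_extract3 _ h
    have tot' : ∀ x y : Fin n, x ≠ y → s(x, y) ∈ B ∪ A := by
      intro x y hxy
      rw [Finset.union_comm]
      exact tot x y hxy
    have hmB : ∀ i : Fin 5, ¬ (s(z, w i) ∈ A) → s(z, w i) ∈ B := by
      intro i hi
      rcases Finset.mem_union.1 (tot z (w i) (hzw i)) with h' | h'
      · exact absurd h' hi
      · exact h'
    exact core B A hB hA tot' a b c hab hac hbc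
      (hmB a (Finset.mem_filter.1 ha).2) (hmB b (Finset.mem_filter.1 hb).2)
      (hmB c (Finset.mem_filter.1 hc).2)

/-- Determinacy: every triangle-free position is a win for the mover or for
the non-mover. -/
lemma sim_determined (hn : 6 ≤ n) :
    ∀ (k : ℕ) (A B : Finset (Sym2 (Fin n))), (avail A B).card ≤ k →
      ¬ HasTriangle A → ¬ HasTriangle B → MoverWins A B ∨ NonMoverWins A B := by
  intro k
  induction k with
  | zero =>
    intro A B hc hA hB
    obtain ⟨y, hy⟩ := sim_avail_nonempty hn hA hB
    rw [Finset.card_eq_zero.1 (Nat.le_zero.1 hc)] at hy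
    exact absurd hy (Finset.notMem_empty _)
  | succ k ih =>
    intro A B hc hA hB
    by_cases hP : ∃ e ∈ avail A B, ¬ HasTriangle (insert e A) ∧
        ∀ f ∈ avail B (insert e A), ¬ HasTriangle (insert f B) →
          MoverWins (insert e A) (insert f B)
    · obtain ⟨e, he, hsafe, hrep⟩ := hP
      exact Or.inl (MoverWins.step A B e he hsafe (sim_avail_nonempty hn hB hsafe) hrep)
    · push_neg at hP
      refine Or.inr ⟨sim_avail_nonempty hn hA hB, ?_⟩
      intro e he hse
      obtain ⟨f, hf, hsf, hnw⟩ := hP e he hse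
      have hsub : avail (insert e A) (insert f B) ⊆ (avail A B).erase e := by
        intro x hx
        rw [sim_mem_avail] at hx
        rw [Finset.mem_erase, sim_mem_avail]
        have hxe : x ≠ e := fun h => hx.2.1 (h ▸ Finset.mem_insert_self e A)
        exact ⟨hxe, hx.1, fun h => hx.2.1 (Finset.mem_insert_of_mem h),
          fun h => hx.2.2 (Finset.mem_insert_of_mem h)⟩
      have hcard : (avail (insert e A) (insert f B)).card ≤ k := by
        have h1 := Finset.card_le_card hsub
        have h2 := Finset.card_erase_of_mem he
        omega
      rcases ih (insert e A) (insert f B) hcard hse hsf with hM | hN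
      · exact absurd hM hnw
      · exact MoverWins.step B (insert e A) f hf hsf hN.1 hN.2

/-- If the mover wins with an extra edge `x` claimed, where `x` can never be
safely claimed by the opponent, then the mover also wins without it
(with `x` uncolored instead). -/
lemma sim_moverWins_shrink {A' B : Finset (Sym2 (Fin n))} (h : MoverWins A' B) :
    ∀ (x : Sym2 (Fin n)) (A : Finset (Sym2 (Fin n))), A' = insert x A → x ∉ A → x ∉ B →
      HasTriangle (insert x B) → MoverWins A B := by
  induction h with
  | step own opp e he hsafe hne hrep ih =>
    intro x A hA hxA hxB hT
    subst hA
    have hemem := sim_mem_avail.1 he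
    have hex : e ≠ x := fun h => hemem.2.1 (h ▸ Finset.mem_insert_self x A)
    refine MoverWins.step A opp e ?_ ?_ ?_ ?_
    · rw [sim_mem_avail]
      exact ⟨hemem.1, fun h => hemem.2.1 (Finset.mem_insert_of_mem h), hemem.2.2⟩
    · intro ht
      exact hsafe (sim_hasTriangle_mono
        (Finset.insert_subset_insert e (Finset.subset_insert x A)) ht)
    · obtain ⟨y, hy⟩ := hne
      refine ⟨y, ?_⟩
      rw [sim_mem_avail] at hy ⊢
      exact ⟨hy.1, hy.2.1, fun h => hy.2.2
        (Finset.insert_subset_insert e (Finset.subset_insert x A) h)⟩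
    · intro f hf hsf
      rw [sim_mem_avail] at hf
      by_cases hfx : f = x
      · subst hfx
        exact absurd hT hsf
      · have hf' : f ∈ avail opp (insert e (insert x A)) := by
          rw [sim_mem_avail]
          refine ⟨hf.1, hf.2.1, ?_⟩
          intro hmem
          rcases Finset.mem_insert.1 hmem with h | h
          · exact hf.2.2 (h ▸ Finset.mem_insert_self f A)
          · rcases Finset.mem_insert.1 h with h' | h'
            · exact hfx h'
            · exact hf.2.2 (Finset.mem_insert_of_mem h')
        have := ih f hf' hsf x (insert e A) (Finset.insert_comm e x A)
          (by
            intro hmem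
            rcases Finset.mem_insert.1 hmem with h | h
            · exact hex h.symm
            · exact hxA h)
          (by
            intro hmem
            rcases Finset.mem_insert.1 hmem with h | h
            · exact hfx h.symm
            · exact hxB h)
          (sim_hasTriangle_mono
            (Finset.insert_subset_insert x (Finset.subset_insert f opp)) hT)
        exact this

lemma sim_isDiag_map {m k : ℕ} {f : Fin m → Fin k} (hf : Function.Injective f)
    (e : Sym2 (Fin m)) : (Sym2.map f e).IsDiag ↔ e.IsDiag := by
  induction e using Sym2.inductionOn with
  | hf x y =>
    rw [Sym2.map_pair_eq, Sym2.mk_isDiag_iff, Sym2.mk_isDiag_iff]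
    exact hf.eq_iff

lemma sim_hasTriangle_image_of {m k : ℕ} {f : Fin m → Fin k} (hf : Function.Injective f)
    {S : Finset (Sym2 (Fin m))} (h : HasTriangle S) :
    HasTriangle (S.image (Sym2.map f)) := by
  obtain ⟨a, b, c, hab, hac, hbc, e1, e2, e3⟩ := h
  refine ⟨f a, f b, f c, fun h => hab (hf h), fun h => hac (hf h), fun h => hbc (hf h),
    ?_, ?_, ?_⟩
  · rw [← Sym2.map_pair_eq]; exact Finset.mem_image_of_mem _ e1
  · rw [← Sym2.map_pair_eq]; exact Finset.mem_image_of_mem _ e2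
  · rw [← Sym2.map_pair_eq]; exact Finset.mem_image_of_mem _ e3

lemma sim_hasTriangle_of_image {m k : ℕ} {f : Fin m → Fin k} (hf : Function.Injective f)
    {S : Finset (Sym2 (Fin m))} (h : HasTriangle (S.image (Sym2.map f))) :
    HasTriangle S := by
  obtain ⟨a, b, c, hab, hac, hbc, e1, e2, e3⟩ := h
  have hrange : ∀ {x y : Fin k}, s(x, y) ∈ S.image (Sym2.map f) →
      (∃ p, f p = x) ∧ (∃ q, f q = y) := by
    intro x y hxy
    obtain ⟨u, _, hu⟩ := Finset.mem_image.1 hxy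
    induction u using Sym2.inductionOn with
    | hf p q =>
      rw [Sym2.map_pair_eq] at hu
      rcases Sym2.eq_iff.1 hu with ⟨h1, h2⟩ | ⟨h1, h2⟩
      · exact ⟨⟨p, h1⟩, ⟨q, h2⟩⟩
      · exact ⟨⟨q, h2⟩, ⟨p, h1⟩⟩
  obtain ⟨⟨a', rfl⟩, ⟨b', rfl⟩⟩ := hrange e1
  obtain ⟨_, ⟨c', rfl⟩⟩ := hrange e2
  have hmem : ∀ {p q : Fin m}, s(f p, f q) ∈ S.image (Sym2.map f) → s(p, q) ∈ S := by
    intro p q hpq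
    obtain ⟨u, hu, hu2⟩ := Finset.mem_image.1 hpq
    rw [← Sym2.map_pair_eq] at hu2
    rwa [← Sym2.map.injective hf hu2]
  exact ⟨a', b', c', fun h => hab (congrArg f h), fun h => hac (congrArg f h),
    fun h => hbc (congrArg f h), hmem e1, hmem e2, hmem e3⟩

lemma sim_image_simEdges (π : Equiv.Perm (Fin n)) :
    (simEdges n).image (Sym2.map π) = simEdges n := by
  ext e
  simp only [simEdges, Finset.mem_image, Finset.mem_filter, Finset.mem_univ, true_and]
  constructor
  · rintro ⟨a, ha, rfl⟩
    rwa [sim_isDiag_map π.injective]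
  · intro he
    refine ⟨Sym2.map π.symm e, ?_, ?_⟩
    · rwa [sim_isDiag_map π.symm.injective]
    · rw [Sym2.map_map]
      have : (⇑π ∘ ⇑π.symm) = id := π.self_comp_symm
      rw [this, Sym2.map_id, id_eq]

lemma sim_image_avail (π : Equiv.Perm (Fin n)) (A B : Finset (Sym2 (Fin n))) :
    avail (A.image (Sym2.map π)) (B.image (Sym2.map π)) = (avail A B).image (Sym2.map π) := by
  unfold avail
  rw [Finset.image_sdiff _ _ (Sym2.map.injective π.injective), Finset.image_union,
    sim_image_simEdges]

lemma sim_moverWins_image (π : Equiv.Perm (Fin n)) {A B : Finset (Sym2 (Fin n))}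
    (h : MoverWins A B) :
    MoverWins (A.image (Sym2.map π)) (B.image (Sym2.map π)) := by
  induction h with
  | step own opp e he hsafe hne hrep ih =>
    refine MoverWins.step _ _ (Sym2.map π e) ?_ ?_ ?_ ?_
    · rw [sim_image_avail]
      exact Finset.mem_image_of_mem _ he
    · rw [← Finset.image_insert]
      intro ht
      exact hsafe (sim_hasTriangle_of_image π.injective ht)
    · rw [← Finset.image_insert, sim_image_avail]
      exact hne.image _
    · intro f hf hsf
      rw [← Finset.image_insert, sim_image_avail] at hf
      obtain ⟨g, hg, rfl⟩ := Finset.mem_image.1 hf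
      rw [← Finset.image_insert] at hsf
      rw [← Finset.image_insert, ← Finset.image_insert]
      exact ih g hg (fun ht => hsf (sim_hasTriangle_image_of π.injective ht))

/-- The pentagon on `Fin 5`. -/
def sim_pentagonT : Finset (Sym2 (Fin 5)) :=
  Finset.univ.image (fun i : Fin 5 => s(i, i + 1))

/-- The pentagram on `Fin 5`. -/
def sim_pentagramT : Finset (Sym2 (Fin 5)) :=
  Finset.univ.image (fun i : Fin 5 => s(i, i + 2))

/-- Doubling permutation of `Fin 5`, swapping pentagon and pentagram. -/
def sim_tau : Equiv.Perm (Fin 5) :=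
  ⟨fun i => 2 * i, fun i => 3 * i, by decide, by decide⟩

lemma sim_greenK5_eq (v : Fin 5 → Fin n) :
    greenK5 v = sim_pentagonT.image (Sym2.map v) := by
  unfold greenK5 sim_pentagonT
  rw [Finset.image_image]
  rfl

lemma sim_redK5_eq (v : Fin 5 → Fin n) :
    redK5 v = sim_pentagramT.image (Sym2.map v) := by
  unfold redK5 sim_pentagramT
  rw [Finset.image_image]
  rfl

lemma sim_pentagonT_image : sim_pentagonT.image (Sym2.map sim_tau) = sim_pentagramT := by
  decide

lemma sim_pentagramT_image : sim_pentagramT.image (Sym2.map sim_tau) = sim_pentagonT := by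
  decide

lemma sim_pentagonT_no_triangle : ¬ HasTriangle sim_pentagonT := by
  unfold HasTriangle
  decide

lemma sim_pentagramT_no_triangle : ¬ HasTriangle sim_pentagramT := by
  unfold HasTriangle
  decide

end Aux

/-- **Theorem 2.** For `n ≥ 6`, the position consisting of a drawn `K₅` on five
of the vertices with one red edge removed (5 green edges forming a pentagon,
and 4 of the 5 red edges of the complementary pentagram), everything else
uncolored, with PII (red) to move, is a win for PII. -/
theorem drawn_K5_minus_red_edge_secondPlayerWin (n : ℕ) (hn : 6 ≤ n)
    (v : Fin 5 → Fin n) (hv : Function.Injective v) (j : Fin 5) :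
    MoverWins ((redK5 v).erase s(v j, v (j + 2))) (greenK5 v) := by
  classical
  set x : Sym2 (Fin n) := s(v j, v (j + 2)) with hxdef
  set G : Finset (Sym2 (Fin n)) := greenK5 v with hGdef
  set R : Finset (Sym2 (Fin n)) := redK5 v with hRdef
  have hG : ¬ HasTriangle G := by
    rw [hGdef, sim_greenK5_eq]
    intro h
    exact sim_pentagonT_no_triangle (sim_hasTriangle_of_image hv h)
  have hR : ¬ HasTriangle R := by
    rw [hRdef, sim_redK5_eq]
    intro h
    exact sim_pentagramT_no_triangle (sim_hasTriangle_of_image hv h)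
  have hxR : x ∈ R := by
    rw [hRdef]
    exact Finset.mem_image_of_mem _ (Finset.mem_univ j)
  have hxG : x ∉ G := by
    rw [hGdef, sim_greenK5_eq, hxdef]
    intro h
    obtain ⟨u, hu, hu2⟩ := Finset.mem_image.1 h
    have : u = s(j, j + 2) := Sym2.map.injective hv (by rw [hu2, Sym2.map_pair_eq])
    rw [this] at hu
    exact (by decide : ∀ i : Fin 5, s(i, i + 2) ∉ sim_pentagonT) j hu
  have hxdiag : ¬ x.IsDiag := by
    rw [hxdef, Sym2.mk_isDiag_iff]
    intro h
    exact (by decide : ∀ i : Fin 5, i ≠ i + 2) j (hv h)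
  have hins : insert x (R.erase x) = R := Finset.insert_erase hxR
  have hTxG : HasTriangle (insert x G) := by
    refine ⟨v j, v (j + 1), v (j + 2),
      fun h => (by decide : ∀ i : Fin 5, i ≠ i + 1) j (hv h),
      fun h => (by decide : ∀ i : Fin 5, i ≠ i + 2) j (hv h),
      fun h => (by decide : ∀ i : Fin 5, i + 1 ≠ i + 2) j (hv h), ?_, ?_, ?_⟩
    · exact Finset.mem_insert_of_mem (Finset.mem_image_of_mem _ (Finset.mem_univ j))
    · rw [hxdef]; exact Finset.mem_insert_self _ _
    · refine Finset.mem_insert_of_mem ?_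
      have : s(v (j + 1), v (j + 2)) = s(v (j + 1), v ((j + 1) + 1)) := by
        rw [(by decide : ∀ i : Fin 5, i + 1 + 1 = i + 2) j]
      rw [this, hGdef]
      exact Finset.mem_image_of_mem _ (Finset.mem_univ (j + 1))
  rcases sim_determined hn (avail G R).card G R le_rfl hG hR with hM | hN
  · -- the mover would win the completed drawn K5; steal via the colour swap.
    set π : Equiv.Perm (Fin n) := sim_tau.viaEmbedding ⟨v, hv⟩ with hπ
    have hcomm : ⇑π ∘ v = v ∘ ⇑sim_tau := by
      funext i
      exact Equiv.Perm.viaEmbedding_apply sim_tau ⟨v, hv⟩ i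
    have himgG : G.image (Sym2.map π) = R := by
      rw [hGdef, hRdef, sim_greenK5_eq, sim_redK5_eq, Finset.image_image]
      have h1 : (Sym2.map ⇑π ∘ Sym2.map v) = Sym2.map v ∘ Sym2.map ⇑sim_tau := by
        funext u
        simp only [Function.comp_apply]
        rw [Sym2.map_map, Sym2.map_map, hcomm]
      rw [h1, ← Finset.image_image, sim_pentagonT_image]
    have himgR : R.image (Sym2.map π) = G := by
      rw [hGdef, hRdef, sim_greenK5_eq, sim_redK5_eq, Finset.image_image]
      have h1 : (Sym2.map ⇑π ∘ Sym2.map v) = Sym2.map v ∘ Sym2.map ⇑sim_tau := by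
        funext u
        simp only [Function.comp_apply]
        rw [Sym2.map_map, Sym2.map_map, hcomm]
      rw [h1, ← Finset.image_image, sim_pentagramT_image]
    have h2 := sim_moverWins_image π hM
    rw [himgG, himgR] at h2
    exact sim_moverWins_shrink h2 x (R.erase x) hins.symm (Finset.notMem_erase _ _) hxG hTxG
  · obtain ⟨hne0, hrep0⟩ := hN
    refine MoverWins.step _ _ x ?_ ?_ ?_ ?_
    · rw [sim_mem_avail]
      exact ⟨hxdiag, Finset.notMem_erase _ _, hxG⟩
    · rw [hins]; exact hR
    · rw [hins]; exact hne0
    · rw [hins]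
      exact hrep0
end

section
/- In the game 6-Sim, consider the position consisting of a drawn K_5 on 5 of the 6 vertices, with all edges incident to the sixth vertex uncolored and PI to move. Then PII has a winning strategy from this position. -/
/-! Only the five edges at the sixth vertex `w` are uncolored, and two edges `w v i`, `w v j` of
one colour close a triangle exactly when `v i v j` has that colour too. PII answers PI's edge
`w v i` with `w v (i+2)`; PI's only safe reply is `w v (i+3)`, PII then takes `w v (i+1)`, and
PI's last edge `w v (i+4)` closes a green triangle. Formally, the game tree is searched
exhaustively for one labelling of the pentagon, and every other labelling is its image under a
permutation of the vertices, which preserves the game. -/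

instance {n : ℕ} (S : Finset (Sym2 (Fin n))) : Decidable (HasTriangle S) := by
  unfold HasTriangle; infer_instance

/-- A decidable under-approximation of `MoverWins`: search for a strategy winning within `k`
moves of the mover. -/
def moverWinsWithin {n : ℕ} : ℕ → Finset (Sym2 (Fin n)) → Finset (Sym2 (Fin n)) → Bool
  | 0, _, _ => false
  | k + 1, own, opp =>
    decide (∃ e ∈ avail own opp,
      ¬ HasTriangle (insert e own) ∧
      (avail opp (insert e own)).Nonempty ∧
      ∀ f ∈ avail opp (insert e own),
        HasTriangle (insert f opp) ∨ moverWinsWithin k (insert e own) (insert f opp) = true)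

theorem MoverWins.of_moverWinsWithin {n : ℕ} :
    ∀ (k : ℕ) (own opp : Finset (Sym2 (Fin n))), moverWinsWithin k own opp = true →
      MoverWins own opp
  | 0, _, _, h => by simp [moverWinsWithin] at h
  | k + 1, own, opp, h => by
    rw [moverWinsWithin, decide_eq_true_iff] at h
    obtain ⟨e, he, hsafe, hne, hreplies⟩ := h
    refine MoverWins.step own opp e he hsafe hne fun f hf hfsafe => ?_
    exact MoverWins.of_moverWinsWithin k _ _ ((hreplies f hf).resolve_left hfsafe)

section Relabel

variable {n : ℕ} (σ : Equiv.Perm (Fin n))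

theorem simEdges_image_map : (simEdges n).image (Sym2.map σ) = simEdges n := by
  ext e
  simp only [simEdges, Finset.mem_image, Finset.mem_filter, Finset.mem_univ, true_and]
  constructor
  · rintro ⟨e, he, rfl⟩
    rwa [Sym2.isDiag_map σ.injective]
  · intro he
    refine ⟨e.map σ.symm, by rwa [Sym2.isDiag_map σ.symm.injective], ?_⟩
    simp [Sym2.map_map]

theorem avail_image_map (A B : Finset (Sym2 (Fin n))) :
    (avail A B).image (Sym2.map σ) = avail (A.image (Sym2.map σ)) (B.image (Sym2.map σ)) := by
  rw [avail, avail, Finset.image_sdiff _ _ (Sym2.map.injective σ.injective),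
    Finset.image_union, simEdges_image_map]

theorem HasTriangle.image_map {S : Finset (Sym2 (Fin n))} (h : HasTriangle S) :
    HasTriangle (S.image (Sym2.map σ)) := by
  obtain ⟨a, b, c, hab, hac, hbc, h₁, h₂, h₃⟩ := h
  exact ⟨σ a, σ b, σ c, σ.injective.ne hab, σ.injective.ne hac, σ.injective.ne hbc,
    Finset.mem_image_of_mem _ h₁, Finset.mem_image_of_mem _ h₂, Finset.mem_image_of_mem _ h₃⟩

theorem hasTriangle_image_map_iff (S : Finset (Sym2 (Fin n))) :
    HasTriangle (S.image (Sym2.map σ)) ↔ HasTriangle S := by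
  refine ⟨fun h => ?_, HasTriangle.image_map σ⟩
  simpa [Finset.image_image, ← Sym2.map_comp] using h.image_map σ.symm

theorem MoverWins.image_map {A B : Finset (Sym2 (Fin n))} (h : MoverWins A B) :
    MoverWins (A.image (Sym2.map σ)) (B.image (Sym2.map σ)) := by
  induction h with
  | step own opp e he hsafe hne hreplies ih =>
    refine MoverWins.step _ _ (e.map σ) ?_ ?_ ?_ fun f hf hfsafe => ?_
    · rw [← avail_image_map]
      exact Finset.mem_image_of_mem _ he
    · rwa [← Finset.image_insert, hasTriangle_image_map_iff]
    · rw [← Finset.image_insert, ← avail_image_map]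
      exact hne.image _
    · rw [← Finset.image_insert, ← avail_image_map] at hf
      obtain ⟨f₀, hf₀, rfl⟩ := Finset.mem_image.mp hf
      rw [← Finset.image_insert, hasTriangle_image_map_iff] at hfsafe
      simpa only [Finset.image_insert] using ih f₀ hf₀ hfsafe

theorem NonMoverWins.image_map {A B : Finset (Sym2 (Fin n))} (h : NonMoverWins A B) :
    NonMoverWins (A.image (Sym2.map σ)) (B.image (Sym2.map σ)) := by
  obtain ⟨hne, hmoves⟩ := h
  refine ⟨by rw [← avail_image_map]; exact hne.image _, fun e he hsafe => ?_⟩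
  rw [← avail_image_map] at he
  obtain ⟨e₀, he₀, rfl⟩ := Finset.mem_image.mp he
  rw [← Finset.image_insert, hasTriangle_image_map_iff] at hsafe
  simpa only [Finset.image_insert] using (hmoves e₀ he₀ hsafe).image_map σ

end Relabel

theorem greenK5_comp {m n : ℕ} (f : Fin m → Fin n) (v : Fin 5 → Fin m) :
    greenK5 (f ∘ v) = (greenK5 v).image (Sym2.map f) := by
  simp only [greenK5, Finset.image_image]
  rfl

theorem redK5_comp {m n : ℕ} (f : Fin m → Fin n) (v : Fin 5 → Fin m) :
    redK5 (f ∘ v) = (redK5 v).image (Sym2.map f) := by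
  simp only [redK5, Finset.image_image]
  rfl

set_option maxRecDepth 20000 in
theorem nonMoverWins_greenK5_castSucc :
    NonMoverWins (greenK5 (Fin.castSucc : Fin 5 → Fin 6)) (redK5 Fin.castSucc) := by
  have hwins : ∀ e ∈ avail (greenK5 (Fin.castSucc : Fin 5 → Fin 6)) (redK5 Fin.castSucc),
      ¬ HasTriangle (insert e (greenK5 Fin.castSucc)) →
      moverWinsWithin 5 (redK5 Fin.castSucc) (insert e (greenK5 Fin.castSucc)) = true := by
    decide
  exact ⟨by decide, fun e he hsafe => MoverWins.of_moverWinsWithin 5 _ _ (hwins e he hsafe)⟩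

/-- **Proposition (i), case `n = 6`.** In 6-Sim, the position consisting of a
drawn `K₅` on five of the six vertices, all edges at the sixth vertex
uncolored, with PI (green) to move, is a win for PII (the non-mover). -/
theorem drawn_K5_in_sixSim_secondPlayerWin (v : Fin 5 → Fin 6)
    (hv : Function.Injective v) :
    NonMoverWins (greenK5 v) (redK5 v) := by
  obtain ⟨σ, hσ⟩ := Equiv.Perm.exists_extending_pair Fin.castSucc v (Fin.castSucc_injective 5) hv
  have hv_eq : v = σ ∘ Fin.castSucc := funext fun i => (hσ i).symm
  rw [hv_eq, greenK5_comp, redK5_comp]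
  exact nonMoverWins_greenK5_castSucc.image_map σ
end

section
/- If the edge set of the complete graph K_5 is partitioned into two disjoint triangle-free sets of edges G and R, then each of G and R is a 5-cycle through all 5 vertices. In particular, the drawn K_5 is the unique draw position of 5-Sim up to isomorphism. -/
/-- `S` is a 5-cycle through all five vertices of `K₅`. -/
def IsPentagon (S : Finset (Sym2 (Fin 5))) : Prop :=
  ∃ v : Fin 5 → Fin 5, Function.Bijective v ∧
    S = Finset.univ.image (fun i : Fin 5 => s(v i, v (i + 1)))

/-!
A vertex with three neighbours of one colour forces a triangle of the other colour among them
(the Ramsey step behind `R(3,3) = 6`), so in `K₅` every vertex has exactly two neighbours of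
each colour. Around a vertex `x` with green neighbours `a, b` and red neighbours `c, d`, where
say `ac` is green, this degree bound fixes the colour of every remaining edge: the green edges
form the pentagon `x a c d b` and the red ones the pentagram `x c b a d`.
-/

open Finset

lemma Finset.eq_and_eq_of_subset_of_union_eq {α : Type*} [DecidableEq α] {A B G R : Finset α}
    (hA : A ⊆ G) (hB : B ⊆ R) (hd : Disjoint G R) (h : A ∪ B = G ∪ R) : A = G ∧ B = R := by
  have key : ∀ {A B G R : Finset α}, B ⊆ R → Disjoint G R → A ∪ B = G ∪ R → G ⊆ A :=
    fun hB hd h g hg => (mem_union.mp (h ▸ mem_union_left _ hg)).resolve_right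
      fun hb => disjoint_left.mp hd hg (hB hb)
  exact ⟨hA.antisymm (key hB hd h),
    hB.antisymm (key hA hd.symm (by rw [union_comm, h, union_comm]))⟩

section Partition

variable {n : ℕ} {G R : Finset (Sym2 (Fin n))}

lemma mem_simEdges {x y : Fin n} : s(x, y) ∈ simEdges n ↔ x ≠ y := by
  simp [simEdges]

lemma ne_of_mem_of_union_eq (hu : G ∪ R = simEdges n) {x y : Fin n} (h : s(x, y) ∈ G) :
    x ≠ y :=
  mem_simEdges.mp (hu ▸ mem_union_left R h)

lemma ne_of_mem_of_mem (hd : Disjoint G R) {x y z : Fin n} (hy : s(x, y) ∈ G)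
    (hz : s(x, z) ∈ R) : y ≠ z := by
  rintro rfl
  exact disjoint_left.mp hd hy hz

lemma mem_of_not_mem_of_union_eq (hu : G ∪ R = simEdges n) {x y : Fin n} (hxy : x ≠ y)
    (h : s(x, y) ∉ G) : s(x, y) ∈ R :=
  (mem_union.mp (hu ▸ mem_simEdges.mpr hxy)).resolve_left h

lemma mem_of_common_nbr (hu : G ∪ R = simEdges n) (hG : ¬ HasTriangle G) {x a b : Fin n}
    (hab : a ≠ b) (ha : s(x, a) ∈ G) (hb : s(x, b) ∈ G) : s(a, b) ∈ R :=
  mem_of_not_mem_of_union_eq hu hab fun h =>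
    hG ⟨x, a, b, ne_of_mem_of_union_eq hu ha, ne_of_mem_of_union_eq hu hb, hab, ha, hb, h⟩

lemma hasTriangle_of_three_nbrs (hu : G ∪ R = simEdges n) (hG : ¬ HasTriangle G)
    {x a b c : Fin n} (hab : a ≠ b) (hac : a ≠ c) (hbc : b ≠ c)
    (ha : s(x, a) ∈ G) (hb : s(x, b) ∈ G) (hc : s(x, c) ∈ G) : HasTriangle R :=
  ⟨a, b, c, hab, hac, hbc, mem_of_common_nbr hu hG hab ha hb,
    mem_of_common_nbr hu hG hac ha hc, mem_of_common_nbr hu hG hbc hb hc⟩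

def nbrs (S : Finset (Sym2 (Fin n))) (x : Fin n) : Finset (Fin n) :=
  {y | s(x, y) ∈ S}

lemma mem_nbrs {S : Finset (Sym2 (Fin n))} {x y : Fin n} : y ∈ nbrs S x ↔ s(x, y) ∈ S := by
  simp [nbrs]

lemma card_nbrs_le_two (hu : G ∪ R = simEdges n) (hG : ¬ HasTriangle G)
    (hR : ¬ HasTriangle R) (x : Fin n) : #(nbrs G x) ≤ 2 := by
  by_contra! h
  obtain ⟨a, ha, b, hb, c, hc, hab, hac, hbc⟩ := two_lt_card.mp h
  exact hR (hasTriangle_of_three_nbrs hu hG hab hac hbc (mem_nbrs.mp ha) (mem_nbrs.mp hb)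
    (mem_nbrs.mp hc))

lemma nbrs_union_nbrs (hu : G ∪ R = simEdges n) (x : Fin n) :
    nbrs G x ∪ nbrs R x = univ.erase x := by
  ext y
  rw [mem_union, mem_nbrs, mem_nbrs, ← mem_union, hu, mem_simEdges, mem_erase]
  simp [eq_comm]

lemma disjoint_nbrs (hd : Disjoint G R) (x : Fin n) : Disjoint (nbrs G x) (nbrs R x) :=
  disjoint_left.mpr fun _ hG hR => disjoint_left.mp hd (mem_nbrs.mp hG) (mem_nbrs.mp hR)

lemma injective_greenK5_subset_redK5_subset_of_nbrs (hd : Disjoint G R)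
    (hu : G ∪ R = simEdges n) (hG : ¬ HasTriangle G) (hR : ¬ HasTriangle R)
    {x a b c d : Fin n} (hab : a ≠ b) (hcd : c ≠ d)
    (hxa : s(x, a) ∈ G) (hxb : s(x, b) ∈ G) (hxc : s(x, c) ∈ R)
    (hxd : s(x, d) ∈ R) (hac : s(a, c) ∈ G) :
    Function.Injective ![x, a, c, d, b] ∧ greenK5 ![x, a, c, d, b] ⊆ G ∧
      redK5 ![x, a, c, d, b] ⊆ R := by
  have hu' : R ∪ G = simEdges n := (union_comm R G).trans hu
  have hxa' := ne_of_mem_of_union_eq hu hxa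
  have hxb' := ne_of_mem_of_union_eq hu hxb
  have hxc' := ne_of_mem_of_union_eq hu' hxc
  have hxd' := ne_of_mem_of_union_eq hu' hxd
  have hac' := ne_of_mem_of_mem hd hxa hxc
  have had' := ne_of_mem_of_mem hd hxa hxd
  have hbc' := ne_of_mem_of_mem hd hxb hxc
  have hbd' := ne_of_mem_of_mem hd hxb hxd
  have hab_R : s(a, b) ∈ R := mem_of_common_nbr hu hG hab hxa hxb
  have hcd_G : s(c, d) ∈ G := mem_of_common_nbr hu' hR hcd hxc hxd
  have had_R : s(a, d) ∈ R := mem_of_not_mem_of_union_eq hu had' fun h =>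
    hR (hasTriangle_of_three_nbrs hu hG hxc' hxd' hcd (Sym2.eq_swap ▸ hxa) hac h)
  have hbd_G : s(b, d) ∈ G := mem_of_not_mem_of_union_eq hu' hbd' fun h =>
    hG (hasTriangle_of_three_nbrs hu' hR hxa' hxb' hab (Sym2.eq_swap ▸ hxd)
      (Sym2.eq_swap ▸ had_R) (Sym2.eq_swap ▸ h))
  have hbc_R : s(b, c) ∈ R := mem_of_not_mem_of_union_eq hu hbc' fun h =>
    hR (hasTriangle_of_three_nbrs hu hG had' hab hbd'.symm (Sym2.eq_swap ▸ hac) hcd_G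
      (Sym2.eq_swap ▸ h))
  refine ⟨?_, image_subset_iff.mpr ?_, image_subset_iff.mpr ?_⟩
  · intro i j
    fin_cases i <;> fin_cases j <;> simp [*, Ne.symm, eq_comm]
  all_goals intro i _; fin_cases i <;> simp [*, Sym2.eq_swap]

end Partition

section K5

variable {G R : Finset (Sym2 (Fin 5))}

lemma card_nbrs_eq_two (hd : Disjoint G R) (hu : G ∪ R = simEdges 5) (hG : ¬ HasTriangle G)
    (hR : ¬ HasTriangle R) (x : Fin 5) : #(nbrs G x) = 2 := by
  have hsum : #(nbrs G x) + #(nbrs R x) = 4 := by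
    rw [← card_union_of_disjoint (disjoint_nbrs hd x), nbrs_union_nbrs hu, card_erase_of_mem
      (mem_univ x), card_univ, Fintype.card_fin]
  have hG2 := card_nbrs_le_two hu hG hR x
  have hR2 := card_nbrs_le_two ((union_comm R G).trans hu) hR hG x
  omega

lemma exists_injective_greenK5_subset_redK5_subset (hd : Disjoint G R)
    (hu : G ∪ R = simEdges 5) (hG : ¬ HasTriangle G) (hR : ¬ HasTriangle R) :
    ∃ v : Fin 5 → Fin 5, Function.Injective v ∧ greenK5 v ⊆ G ∧ redK5 v ⊆ R := by
  have hu' : R ∪ G = simEdges 5 := (union_comm R G).trans hu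
  obtain ⟨a, b, hab, hGab⟩ := card_eq_two.mp (card_nbrs_eq_two hd hu hG hR 0)
  obtain ⟨c, d, hcd, hRcd⟩ := card_eq_two.mp (card_nbrs_eq_two hd.symm hu' hR hG 0)
  have hxa : s(0, a) ∈ G := mem_nbrs.mp (hGab ▸ mem_insert_self a {b})
  have hxb : s(0, b) ∈ G := mem_nbrs.mp (hGab ▸ mem_insert_of_mem (mem_singleton_self b))
  have hxc : s(0, c) ∈ R := mem_nbrs.mp (hRcd ▸ mem_insert_self c {d})
  have hxd : s(0, d) ∈ R := mem_nbrs.mp (hRcd ▸ mem_insert_of_mem (mem_singleton_self d))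
  by_cases hac : s(a, c) ∈ G
  · exact ⟨_, injective_greenK5_subset_redK5_subset_of_nbrs hd hu hG hR hab hcd
      hxa hxb hxc hxd hac⟩
  have had : s(a, d) ∈ G := by
    by_contra had
    have hab_R := mem_of_common_nbr hu hG hab hxa hxb
    have hac_R := mem_of_not_mem_of_union_eq hu (ne_of_mem_of_mem hd hxa hxc) hac
    have had_R := mem_of_not_mem_of_union_eq hu (ne_of_mem_of_mem hd hxa hxd) had
    exact hG (hasTriangle_of_three_nbrs hu' hR (ne_of_mem_of_mem hd hxb hxc)
      (ne_of_mem_of_mem hd hxb hxd) hcd hab_R hac_R had_R)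
  exact ⟨_, injective_greenK5_subset_redK5_subset_of_nbrs hd hu hG hR hab hcd.symm
    hxa hxb hxd hxc had⟩

lemma greenK5_union_redK5 {v : Fin 5 → Fin 5} (hv : Function.Injective v) :
    greenK5 v ∪ redK5 v = simEdges 5 := by
  ext e
  induction e using Sym2.ind with | h p q => ?_
  obtain ⟨i, rfl⟩ := Finite.injective_iff_surjective.mp hv p
  obtain ⟨j, rfl⟩ := Finite.injective_iff_surjective.mp hv q
  simp only [greenK5, redK5, mem_union, mem_image, mem_univ, true_and, mem_simEdges,
    Sym2.eq_iff, hv.eq_iff, hv.ne_iff]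
  revert i j
  decide

lemma bijective_two_mul : Function.Bijective (fun i : Fin 5 => 2 * i) := by
  decide

/-- The pentagram `v i — v (i+2)` is the pentagon through `v 0, v 2, v 4, v 1, v 3`. -/
lemma redK5_eq_greenK5_comp {n : ℕ} (v : Fin 5 → Fin n) :
    redK5 v = greenK5 (v ∘ (2 * ·)) := by
  rw [redK5, ← image_univ_of_surjective bijective_two_mul.2, image_image, greenK5]
  congr 1
  funext i
  simp [mul_add]

end K5

/-- If the edge set of `K₅` is partitioned into two disjoint triangle-free edge
sets `G` and `R`, then each of them is a 5-cycle through all five vertices: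
the drawn `K₅` is the unique draw position of 5-Sim up to isomorphism. -/
theorem K5_triangleFree_partition_is_pentagons (G R : Finset (Sym2 (Fin 5)))
    (hd : Disjoint G R) (hu : G ∪ R = simEdges 5)
    (hG : ¬ HasTriangle G) (hR : ¬ HasTriangle R) :
    IsPentagon G ∧ IsPentagon R := by
  obtain ⟨v, hv, hGv, hRv⟩ := exists_injective_greenK5_subset_redK5_subset hd hu hG hR
  have hbij : Function.Bijective v := Finite.injective_iff_bijective.mp hv
  obtain ⟨rfl, rfl⟩ := eq_and_eq_of_subset_of_union_eq hGv hRv hd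
    (by rw [greenK5_union_redK5 hv, hu])
  exact ⟨⟨v, hbij, rfl⟩, ⟨_, hbij.comp bijective_two_mul, redK5_eq_greenK5_comp v⟩⟩
end
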